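/- arXiv:2603.06015 — 2 statements merged into one kernel-verified Lean document; each statement's English description precedes it below -/
import Mathlib

section
/- Let V be a restricted 𝔗_{min(d_0,…,d_{p−1})}-module with annihilating level (h, q) and v ∈ V. Then on the 𝔗-module M(V, a, d), for all l, m, k ∈ ℤ and all 1 ≤ i, j ≤ p−1: Ω^{(i,j,2h)}_{l,m} · v(k) = (−1)^h p^{2h} C(2h, h) (I_h² v)(pl+k+i+j), and Ω^{(i,j,s)}_{l,m} · v(k) = 0 for every s > 2h. -/
open Finsupp TensorProduct

attribute [local instance] LieRing.ofAssociativeRing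

/-! ### Abstract presentation of the twisted Heisenberg-Virasoro algebra -/

/-- The twisted Heisenberg-Virasoro algebra: a complex Lie algebra with basis
`{L n, I n, CL, CLI, CI : n ∈ ℤ}` and the prescribed brackets. -/
structure TwistedHV where
  T : Type
  [lieRing : LieRing T]
  [lieAlg : LieAlgebra ℂ T]
  L : ℤ → T
  I : ℤ → T
  CL : T
  CLI : T
  CI : T
  basis : Module.Basis (ℤ ⊕ ℤ ⊕ Fin 3) ℂ T
  basis_eq : ∀ x, basis x = Sum.elim L (Sum.elim I ![CL, CLI, CI]) x
  bracket_LL : ∀ m n : ℤ,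
    ⁅L m, L n⁆ = ((n : ℂ) - (m : ℂ)) • L (m + n) +
      (if m + n = 0 then (((m : ℂ) ^ 3 - (m : ℂ)) / 12) • CL else 0)
  bracket_LI : ∀ m n : ℤ,
    ⁅L m, I n⁆ = (n : ℂ) • I (m + n) +
      (if m + n = 0 then ((m : ℂ) ^ 2 + (m : ℂ)) • CLI else 0)
  bracket_II : ∀ m n : ℤ,
    ⁅I m, I n⁆ = if m + n = 0 then (m : ℂ) • CI else 0
  central_CL : ∀ x : T, ⁅CL, x⁆ = 0
  central_CLI : ∀ x : T, ⁅CLI, x⁆ = 0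
  central_CI : ∀ x : T, ⁅CI, x⁆ = 0

attribute [instance] TwistedHV.lieRing TwistedHV.lieAlg

/-- The gap-`p` Virasoro algebra: `Lg n` represents `L_{p n}`, `Ig m` represents `I_m`
for `m` not divisible by `p`, and `Cg j` represents the central element `C_j` for
`0 ≤ j ≤ ⌊p/2⌋`. -/
structure GapVirasoro (p : ℕ) where
  g : Type
  [lieRing : LieRing g]
  [lieAlg : LieAlgebra ℂ g]
  Lg : ℤ → g
  Ig : ℤ → g
  Cg : ℕ → g
  basis : Module.Basis (ℤ ⊕ {m : ℤ // ¬ ((p : ℤ) ∣ m)} ⊕ {j : ℕ // j ≤ p / 2}) ℂ g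
  basis_eq : ∀ x, basis x = Sum.elim Lg (Sum.elim (fun m => Ig m.1) (fun j => Cg j.1)) x
  bracket_LL : ∀ m n : ℤ,
    ⁅Lg m, Lg n⁆ = ((p : ℂ) * ((n : ℂ) - (m : ℂ))) • Lg (m + n) +
      (if m + n = 0 then (((m : ℂ) ^ 3 - (m : ℂ)) / 12) • Cg 0 else 0)
  bracket_LI : ∀ m b : ℤ, ¬ ((p : ℤ) ∣ b) →
    ⁅Lg m, Ig b⁆ = (b : ℂ) • Ig ((p : ℤ) * m + b)
  bracket_II : ∀ a b : ℤ, ¬ ((p : ℤ) ∣ a) → ¬ ((p : ℤ) ∣ b) →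
    ⁅Ig a, Ig b⁆ =
      if a + b = 0 then (a : ℂ) • Cg (min ((a % (p : ℤ)).toNat) (p - (a % (p : ℤ)).toNat)) else 0
  central_C : ∀ j : ℕ, j ≤ p / 2 → ∀ x : g, ⁅Cg j, x⁆ = 0

attribute [instance] GapVirasoro.lieRing GapVirasoro.lieAlg

/-- The mirror Heisenberg-Virasoro algebra: `h n` represents `h_{n + 1/2}`. -/
structure MirrorHV where
  M : Type
  [lieRing : LieRing M]
  [lieAlg : LieAlgebra ℂ M]
  d : ℤ → M
  h : ℤ → M
  c : M
  l : M
  basis : Module.Basis (ℤ ⊕ ℤ ⊕ Fin 2) ℂ M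
  basis_eq : ∀ x, basis x = Sum.elim d (Sum.elim h ![c, l]) x
  bracket_dd : ∀ m n : ℤ,
    ⁅d m, d n⁆ = ((m : ℂ) - (n : ℂ)) • d (m + n) +
      (if m + n = 0 then (((m : ℂ) ^ 3 - (m : ℂ)) / 12) • c else 0)
  bracket_dh : ∀ m n : ℤ, ⁅d m, h n⁆ = (-((n : ℂ) + 1 / 2)) • h (m + n)
  bracket_hh : ∀ m n : ℤ,
    ⁅h m, h n⁆ = if m + n + 1 = 0 then ((m : ℂ) + 1 / 2) • l else 0
  central_c : ∀ x : M, ⁅c, x⁆ = 0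
  central_l : ∀ x : M, ⁅l, x⁆ = 0

attribute [instance] MirrorHV.lieRing MirrorHV.lieAlg

/-! ### Representations of the subalgebras `𝔗ₙ` -/

/-- A module over the subalgebra `𝔗ₙ = span{L k, I (n+k) : k ∈ ℕ}` of the twisted
Heisenberg-Virasoro algebra, encoded through the action operators (`IV m` is only
meaningful, and only constrained, for `m ≥ n`). -/
structure THVRep (n : ℕ) where
  V : Type
  [addCommGroup : AddCommGroup V]
  [module : Module ℂ V]
  LV : ℕ → Module.End ℂ V
  IV : ℕ → Module.End ℂ V
  comm_LL : ∀ k l : ℕ, ⁅LV k, LV l⁆ = ((l : ℂ) - (k : ℂ)) • LV (k + l)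
  comm_LI : ∀ k l : ℕ, n ≤ l → ⁅LV k, IV l⁆ = (l : ℂ) • IV (k + l)
  comm_II : ∀ k l : ℕ, n ≤ k → n ≤ l → ⁅IV k, IV l⁆ = 0

attribute [instance] THVRep.addCommGroup THVRep.module

namespace THVRep

variable {n : ℕ}

/-- A `𝔗ₙ`-module is restricted if every vector is annihilated by `L m` and `I m`
for all sufficiently large `m`. -/
def Restricted (R : THVRep n) : Prop :=
  ∀ v : R.V, ∃ N : ℕ, ∀ m : ℕ, N ≤ m → R.LV m v = 0 ∧ R.IV m v = 0

/-- `V` has annihilating level `(h, q)` (with `h ≥ n`). -/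
def AnnLevel (R : THVRep n) (h q : ℕ) : Prop :=
  n ≤ h ∧ (∃ v : R.V, R.IV h v ≠ 0) ∧ (∃ v : R.V, R.LV q v ≠ 0) ∧
    (∀ k : ℕ, h < k → ∀ v : R.V, R.IV k v = 0) ∧
    (∀ k : ℕ, q < k → ∀ v : R.V, R.LV k v = 0)

/-- Irreducibility of a `𝔗ₙ`-module. -/
def IsSimple (R : THVRep n) : Prop :=
  (∃ v : R.V, v ≠ 0) ∧
  ∀ W : Submodule ℂ R.V,
    (∀ k : ℕ, ∀ v ∈ W, R.LV k v ∈ W) →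
    (∀ m : ℕ, n ≤ m → ∀ v ∈ W, R.IV m v ∈ W) →
    W = ⊥ ∨ W = ⊤

end THVRep

/-- Isomorphism of `𝔗_r`-modules (both sides regarded as `𝔗_r`-modules by restriction). -/
def RepIso {n₁ n₂ : ℕ} (R : THVRep n₁) (S : THVRep n₂) (r : ℕ) : Prop :=
  ∃ ψ : R.V ≃ₗ[ℂ] S.V,
    (∀ k : ℕ, ∀ v : R.V, ψ (R.LV k v) = S.LV k (ψ v)) ∧
    (∀ m : ℕ, r ≤ m → ∀ v : R.V, ψ (R.IV m v) = S.IV m (ψ v))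

/-- `min {d i : i ∈ P}` (junk value `0` if `P = ∅`). -/
def finsetMin (P : Finset ℕ) (d : ℕ → ℕ) : ℕ :=
  if h : P.Nonempty then P.inf' h d else 0

/-- `min (d 0, …, d (p-1))`. -/
def dmin (p : ℕ) (d : ℕ → ℕ) : ℕ := finsetMin (Finset.range p) d

/-- The set `P - P = {(i - j) mod p : i, j ∈ P}`. -/
def PdiffP (p : ℕ) (P : Finset ℕ) : Finset ℕ :=
  Finset.image₂ (fun i j : ℕ => (((i : ℤ) - (j : ℤ)) % (p : ℤ)).toNat) P P

/-- The index set `𝒫 = {k ∈ ℤ : k mod p ∈ P}`. -/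
def PIdx (p : ℕ) (P : Finset ℕ) : Type :=
  {k : ℤ // ((k % (p : ℤ)).toNat) ∈ P}

lemma mem_shift {P : Finset ℕ} {q r k : ℤ} (h : (((r + k) % q).toNat) ∈ P) (m : ℤ) :
    (((q * m + r + k) % q).toNat) ∈ P := by
  have e : q * m + r + k = r + k + m * q := by ring
  rw [e, Int.add_mul_emod_self_right]
  exact h

lemma mem_shift0 {P : Finset ℕ} {q k : ℤ} (h : ((k % q).toNat) ∈ P) (m : ℤ) :
    (((q * m + k) % q).toNat) ∈ P := by
  have e : q * m + k = k + m * q := by ring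
  rw [e, Int.add_mul_emod_self_right]
  exact h

/-- Shift of an index `k ∈ 𝒫` by `p * m`. -/
def shiftIdx0 {p : ℕ} {P : Finset ℕ} (k : PIdx p P) (m : ℤ) : PIdx p P :=
  ⟨(p : ℤ) * m + k.1, mem_shift0 k.2 m⟩

/-! ### Representations, irreducibility and isomorphism -/

/-- Irreducibility of a representation `ρ` of a complex Lie algebra. -/
def IsIrreducibleRep {g : Type} [LieRing g] [LieAlgebra ℂ g]
    {M : Type} [AddCommGroup M] [Module ℂ M]
    (ρ : g →ₗ⁅ℂ⁆ Module.End ℂ M) : Prop :=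
  (∃ w : M, w ≠ 0) ∧
  ∀ W : Submodule ℂ M, (∀ x : g, ∀ w ∈ W, ρ x w ∈ W) → W = ⊥ ∨ W = ⊤

/-- Isomorphism of two representations of the same complex Lie algebra. -/
def RepModIso {g : Type} [LieRing g] [LieAlgebra ℂ g]
    {M₁ M₂ : Type} [AddCommGroup M₁] [Module ℂ M₁] [AddCommGroup M₂] [Module ℂ M₂]
    (ρ₁ : g →ₗ⁅ℂ⁆ Module.End ℂ M₁) (ρ₂ : g →ₗ⁅ℂ⁆ Module.End ℂ M₂) : Prop :=
  ∃ φ : M₁ ≃ₗ[ℂ] M₂, ∀ (x : g) (w : M₁), φ (ρ₁ x w) = ρ₂ x (φ w)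

/-- The action formulas defining the `𝔗`-module `M(V, a, d)` on `V ⊗ ℂ[x^{±1}] = ℤ →₀ V`. -/
def IsTHVAction (T : TwistedHV) (p : ℕ) (d : ℕ → ℕ) (a : ℂ) {n : ℕ} (R : THVRep n)
    (ρ : T.T →ₗ⁅ℂ⁆ Module.End ℂ (ℤ →₀ R.V)) : Prop :=
  (∀ (m k : ℤ) (v : R.V),
    ρ (T.L m) (Finsupp.single k v) =
      (a + (k : ℂ)) • Finsupp.single (m + k) v +
      ∑ᶠ j : ℕ, (((m : ℂ) ^ (j + 1)) / ((j + 1).factorial : ℂ)) •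
        Finsupp.single (m + k) (R.LV j v)) ∧
  (∀ (b k : ℤ) (v : R.V),
    ρ (T.I b) (Finsupp.single k v) =
      ∑ᶠ j : ℕ, (((b : ℂ) ^ (j + d ((b % (p : ℤ)).toNat))) /
          ((j + d ((b % (p : ℤ)).toNat)).factorial : ℂ)) •
        Finsupp.single (b + k) (R.IV (j + d ((b % (p : ℤ)).toNat)) v)) ∧
  ρ T.CL = 0 ∧ ρ T.CLI = 0 ∧ ρ T.CI = 0

/-- The action formulas defining the `𝔤`-module `M(V, a, d, P)` on `V ⊗ ℂ[P]`. -/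
def IsGapAction {p : ℕ} (G : GapVirasoro p) (P : Finset ℕ) (d : ℕ → ℕ) (a : ℂ)
    {n : ℕ} (R : THVRep n)
    (ρ : G.g →ₗ⁅ℂ⁆ Module.End ℂ (PIdx p P →₀ R.V)) : Prop :=
  (∀ (m : ℤ) (k : PIdx p P) (v : R.V),
    ρ (G.Lg m) (Finsupp.single k v) =
      (a + (k.1 : ℂ)) • Finsupp.single (shiftIdx0 k m) v +
      ∑ᶠ j : ℕ, (((((p : ℤ) * m : ℤ) : ℂ) ^ (j + 1)) / ((j + 1).factorial : ℂ)) •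
        Finsupp.single (shiftIdx0 k m) (R.LV j v)) ∧
  (∀ (m : ℤ) (i : ℕ), 1 ≤ i → i ≤ p - 1 → ∀ (k : PIdx p P) (v : R.V),
    ρ (G.Ig ((p : ℤ) * m + (i : ℤ))) (Finsupp.single k v) =
      if h : ((((i : ℤ) + k.1) % (p : ℤ)).toNat) ∈ P then
        ∑ᶠ j : ℕ, (((((p : ℤ) * m + (i : ℤ) : ℤ) : ℂ) ^ (j + d i)) / ((j + d i).factorial : ℂ)) •
          Finsupp.single (⟨(p : ℤ) * m + (i : ℤ) + k.1, mem_shift h m⟩ : PIdx p P)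
            (R.IV (j + d i) v)
      else 0) ∧
  (∀ j : ℕ, j ≤ p / 2 → ρ (G.Cg j) = 0)

/-- The operator `Ω^{(i,j,s)}_{l,m}` as an element of the universal enveloping algebra. -/
noncomputable def OmegaU (T : TwistedHV) (p : ℕ) (i j : ℕ) (l m : ℤ) (s : ℕ) :
    UniversalEnvelopingAlgebra ℂ T.T :=
  ∑ k ∈ Finset.range (s + 1),
    ((-1 : ℂ) ^ (s - k) * (s.choose k : ℂ)) •
      ((UniversalEnvelopingAlgebra.ι ℂ (T.I ((p : ℤ) * l - (p : ℤ) * m - (p : ℤ) * k + (i : ℤ)))) *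
       (UniversalEnvelopingAlgebra.ι ℂ (T.I ((p : ℤ) * m + (p : ℤ) * k + (j : ℤ)))))

/-- The action of the operator `Ω^{(i,j,s)}_{l,m}` in a representation `ρ`, where `Iop`
is the family of elements `I_n`. -/
noncomputable def OmegaOp {g : Type} [LieRing g] [LieAlgebra ℂ g]
    {M : Type} [AddCommGroup M] [Module ℂ M]
    (ρ : g →ₗ⁅ℂ⁆ Module.End ℂ M) (Iop : ℤ → g) (p : ℕ) (i j : ℕ) (l m : ℤ) (s : ℕ) :
    Module.End ℂ M :=
  ∑ k ∈ Finset.range (s + 1),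
    ((-1 : ℂ) ^ (s - k) * (s.choose k : ℂ)) •
      (ρ (Iop ((p : ℤ) * l - (p : ℤ) * m - (p : ℤ) * k + (i : ℤ))) *
       ρ (Iop ((p : ℤ) * m + (p : ℤ) * k + (j : ℤ))))

/-- The module of intermediate series `A(α, β, γ, Q)` over the gap-2 Virasoro algebra. -/
def IsARep (G : GapVirasoro 2) (α β γ : ℂ) (Q : Finset ℕ)
    (ρ : G.g →ₗ⁅ℂ⁆ Module.End ℂ (PIdx 2 Q →₀ ℂ)) : Prop :=
  (∀ (m : ℤ) (k : PIdx 2 Q),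
    ρ (G.Lg m) (Finsupp.single k (1 : ℂ)) =
      (α + 2 * β * (m : ℂ) + (k.1 : ℂ)) • Finsupp.single (shiftIdx0 k m) (1 : ℂ)) ∧
  (∀ (m : ℤ) (k : PIdx 2 Q),
    ρ (G.Ig (((2 : ℕ) : ℤ) * m + 1) ) (Finsupp.single k (1 : ℂ)) =
      if h : (((1 + k.1) % ((2 : ℕ) : ℤ)).toNat) ∈ Q then
        (if k.1 % 2 = 0 then (1 : ℂ) else γ) •
          Finsupp.single (⟨((2 : ℕ) : ℤ) * m + 1 + k.1, mem_shift h m⟩ : PIdx 2 Q) (1 : ℂ)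
      else 0) ∧
  ρ (G.Cg 0) = 0 ∧ ρ (G.Cg 1) = 0

/-- An irreducible highest weight representation of the gap-2 Virasoro algebra of level
`(c, h, l)`, i.e. a copy of `L(c, h, l)`. -/
def IsHWRep {HW : Type} [AddCommGroup HW] [Module ℂ HW]
    (G : GapVirasoro 2) (c h l : ℂ) (ρ : G.g →ₗ⁅ℂ⁆ Module.End ℂ HW) : Prop :=
  IsIrreducibleRep ρ ∧
  ∃ w₀ : HW, w₀ ≠ 0 ∧ ρ (G.Lg 0) w₀ = h • w₀ ∧
    ρ (G.Cg 0) w₀ = c • w₀ ∧ ρ (G.Cg 1) w₀ = l • w₀ ∧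
    (∀ m : ℕ, 1 ≤ m → ρ (G.Lg (m : ℤ)) w₀ = 0 ∧ ρ (G.Ig (2 * (m : ℤ) - 1)) w₀ = 0)

/-- `ρ₂` is a subquotient of `ρ₁`: there is an invariant submodule `W` and an
equivariant surjection `W → M₂`. -/
def IsSubquotientRep {g : Type} [LieRing g] [LieAlgebra ℂ g]
    {M₁ M₂ : Type} [AddCommGroup M₁] [Module ℂ M₁] [AddCommGroup M₂] [Module ℂ M₂]
    (ρ₁ : g →ₗ⁅ℂ⁆ Module.End ℂ M₁) (ρ₂ : g →ₗ⁅ℂ⁆ Module.End ℂ M₂) : Prop :=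
  ∃ W : Submodule ℂ M₁, ∃ hW : ∀ x : g, ∀ w ∈ W, ρ₁ x w ∈ W,
    ∃ π : W →ₗ[ℂ] M₂, Function.Surjective π ∧
      ∀ (x : g) (w : M₁) (hw : w ∈ W), π ⟨ρ₁ x w, hW x w hw⟩ = ρ₂ x (π ⟨w, hw⟩)

/-!
On `v(k)` the generator `I_b` acts by `∑_{d_r ≤ t ≤ h} b^t/t! (I_t v)(b+k)`, where `r` is the
residue of `b` mod `p`, since `I_t V = 0` for `t > h`. Hence `Ω^{(i,j,s)}_{l,m} v(k)` is a
combination of the vectors `(I_u I_t v)(pl+k+i+j)`, and the coefficient of each one is, up to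
`1/(u! t!)`, the `s`-th forward difference at `0` of the polynomial
`c ↦ (p(l-m-c)+i)^u (p(m+c)+j)^t` of degree `u + t ≤ 2h`. For `s ≥ 2h` it vanishes unless
`u = t = h = s/2`, where it is `(2h)! (-p)^h p^h`.

For the term `u = t = h` to occur one needs `d_i, d_j ≤ h`. Otherwise `h = 0` and every `I_b` with
`b ≡ i` acts by zero; then so does every `I_c`, since `[L_{c-b}, I_b] = b I_c` up to a central term,
which contradicts `I_0 ≠ 0` on the residue where `d` vanishes.
-/

open Finset
open scoped Nat

section FiniteDifference

open Polynomial

variable {R : Type*} [CommRing R]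

theorem Polynomial.fwdDiff_iter_eval_eq_factorial_mul_coeff {P : R[X]} {n : ℕ}
    (hP : P.natDegree ≤ n) (x : R) : (fwdDiff 1)^[n] P.eval x = n ! * P.coeff n := by
  rcases hP.lt_or_eq with hlt | rfl
  · rw [fwdDiff_iter_eq_zero_of_degree_lt hlt, coeff_eq_zero_of_natDegree_lt hlt]
    simp
  · rw [fwdDiff_iter_degree_eq_factorial, leadingCoeff]
    simp [mul_comm]

theorem Polynomial.sum_range_alternating_choose_mul_eval {P : R[X]} {n : ℕ}
    (hP : P.natDegree ≤ n) :
    ∑ k ∈ range (n + 1), (-1) ^ (n - k) * n.choose k * P.eval (k : R) = n ! * P.coeff n := by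
  rw [← fwdDiff_iter_eval_eq_factorial_mul_coeff hP 0, fwdDiff_iter_eq_sum_shift]
  simp [zsmul_eq_mul]

theorem sum_range_alternating_choose_mul_linear_pow_mul_linear_pow (a A b B : R)
    {u t n : ℕ} (hn : u + t ≤ n) :
    ∑ k ∈ range (n + 1), (-1) ^ (n - k) * n.choose k * ((a * k + A) ^ u * (b * k + B) ^ t) =
      if u + t = n then n ! * (a ^ u * b ^ t) else 0 := by
  have hdeg_a : (C a * X + C A).natDegree ≤ 1 := natDegree_linear_le
  have hdeg_b : (C b * X + C B).natDegree ≤ 1 := natDegree_linear_le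
  have hdeg : ((C a * X + C A) ^ u * (C b * X + C B) ^ t).natDegree ≤ u + t :=
    natDegree_mul_le_of_le (natDegree_pow_le_of_le u hdeg_a |>.trans (by simp))
      (natDegree_pow_le_of_le t hdeg_b |>.trans (by simp))
  have hsum := sum_range_alternating_choose_mul_eval (hdeg.trans hn)
  simp only [eval_mul, eval_pow, eval_add, eval_C, eval_X] at hsum
  rw [hsum]
  split_ifs with heq
  · subst heq
    have hcoeff {c D : R} (w : ℕ) : ((C c * X + C D) ^ w).coeff w = c ^ w := by
      simpa using coeff_pow_of_natDegree_le (m := w) (natDegree_linear_le (a := c) (b := D))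
    rw [coeff_mul_add_eq_of_natDegree_le (natDegree_pow_le_of_le u hdeg_a |>.trans (by simp))
      (natDegree_pow_le_of_le t hdeg_b |>.trans (by simp)), hcoeff, hcoeff]
  · rw [coeff_eq_zero_of_natDegree_lt (hdeg.trans_lt (lt_of_le_of_ne hn heq)), mul_zero]

end FiniteDifference

lemma toNat_natCast_mul_add_emod {p r : ℕ} (hr : r < p) (x : ℤ) :
    (((p : ℤ) * x + r) % p).toNat = r := by
  rw [add_comm, Int.add_mul_emod_self_left,
    Int.emod_eq_of_lt (by positivity) (by exact_mod_cast hr), Int.toNat_natCast]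

lemma exists_lt_eq_dmin {p : ℕ} (hp : 0 < p) (d : ℕ → ℕ) : ∃ r < p, d r = dmin p d := by
  have hne : (range p).Nonempty := nonempty_range_iff.mpr hp.ne'
  obtain ⟨r, hr, hdr⟩ := exists_mem_eq_inf' hne d
  exact ⟨r, mem_range.mp hr, by rw [dmin, finsetMin, dif_pos hne, hdr]⟩

namespace TwistedHV

lemma map_I_eq_zero_of_map_I_eq_zero (T : TwistedHV) {M : Type} [AddCommGroup M] [Module ℂ M]
    {ρ : T.T →ₗ⁅ℂ⁆ Module.End ℂ M} (hCLI : ρ T.CLI = 0) {b : ℤ} (hb : b ≠ 0)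
    (hIb : ρ (T.I b) = 0) (c : ℤ) : ρ (T.I c) = 0 := by
  have hbracket : ρ ⁅T.L (c - b), T.I b⁆ = (b : ℂ) • ρ (T.I c) := by
    rw [T.bracket_LI, sub_add_cancel, map_add, map_smul]
    split_ifs <;> simp [hCLI]
  rw [LieHom.map_lie, hIb, lie_zero] at hbracket
  exact (smul_eq_zero.mp hbracket.symm).resolve_left (by exact_mod_cast hb)

end TwistedHV

namespace IsTHVAction

section

variable {T : TwistedHV} {p : ℕ} {d : ℕ → ℕ} {a : ℂ} {n : ℕ} {R : THVRep n}
  {ρ : T.T →ₗ⁅ℂ⁆ Module.End ℂ (ℤ →₀ R.V)} {h : ℕ}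

lemma I_single (hρ : IsTHVAction T p d a R ρ) (hI : ∀ k, h < k → ∀ v, R.IV k v = 0)
    (b c : ℤ) (w : R.V) :
    ρ (T.I b) (Finsupp.single c w) =
      ∑ t ∈ Ico (d (b % p).toNat) (h + 1),
        ((b : ℂ) ^ t / (t ! : ℂ)) • Finsupp.single (b + c) (R.IV t w) := by
  rw [hρ.2.1, sum_Ico_eq_sum_range]
  simp only [add_comm (d _)]
  refine finsum_eq_sum_of_support_subset _ fun t ht => ?_
  rw [Function.mem_support] at ht
  rw [coe_range, Set.mem_Iio]
  by_contra hth
  exact ht (by rw [hI _ (by omega), Finsupp.single_zero, smul_zero])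

lemma I_mul_I_single (hρ : IsTHVAction T p d a R ρ) (hI : ∀ k, h < k → ∀ v, R.IV k v = 0)
    {i j : ℕ} (hi : i < p) (hj : j < p) (x y k : ℤ) (v : R.V) :
    (ρ (T.I (p * x + i)) * ρ (T.I (p * y + j))) (Finsupp.single k v) =
      ∑ t ∈ Ico (d j) (h + 1), ∑ u ∈ Ico (d i) (h + 1),
        (((p * x + i : ℂ) ^ u / u !) * ((p * y + j : ℂ) ^ t / t !)) •
          Finsupp.single (p * (x + y) + k + i + j) (R.IV u (R.IV t v)) := by
  rw [Module.End.mul_apply, hρ.I_single hI, toNat_natCast_mul_add_emod hj, map_sum]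
  refine sum_congr rfl fun t _ => ?_
  rw [map_smul, hρ.I_single hI, toNat_natCast_mul_add_emod hi, Finset.smul_sum]
  refine sum_congr rfl fun u _ => ?_
  rw [smul_smul, mul_comm]
  congr 2
  · push_cast; ring
  · push_cast; ring
  · ring

lemma omegaOp_single (hρ : IsTHVAction T p d a R ρ) (hI : ∀ k, h < k → ∀ v, R.IV k v = 0)
    {i j : ℕ} (hi : i < p) (hj : j < p) (l m k : ℤ) (s : ℕ) (v : R.V) :
    OmegaOp ρ T.I p i j l m s (Finsupp.single k v) =
      ∑ t ∈ Ico (d j) (h + 1), ∑ u ∈ Ico (d i) (h + 1),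
        ((u ! * t ! : ℂ)⁻¹ * ∑ c ∈ range (s + 1), (-1) ^ (s - c) * s.choose c *
            ((-p * c + (p * (l - m) + i) : ℂ) ^ u * (p * c + (p * m + j) : ℂ) ^ t)) •
          Finsupp.single (p * l + k + i + j) (R.IV u (R.IV t v)) := by
  calc OmegaOp ρ T.I p i j l m s (Finsupp.single k v)
      = ∑ c ∈ range (s + 1), ((-1) ^ (s - c) * s.choose c : ℂ) •
          ∑ t ∈ Ico (d j) (h + 1), ∑ u ∈ Ico (d i) (h + 1),
            (((p * (l - m - c) + i : ℂ) ^ u / u !) * ((p * (m + c) + j : ℂ) ^ t / t !)) •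
              Finsupp.single (p * l + k + i + j) (R.IV u (R.IV t v)) := by
        rw [OmegaOp, LinearMap.sum_apply]
        refine sum_congr rfl fun c _ => ?_
        rw [LinearMap.smul_apply,
          show (p : ℤ) * l - p * m - p * c + i = p * (l - m - c) + i by ring,
          show (p : ℤ) * m + p * c + j = p * (m + c) + j by ring, hρ.I_mul_I_single hI hi hj,
          show (p : ℤ) * (l - m - c + (m + c)) = p * l by ring]
        push_cast
        rfl
    _ = _ := by
        simp_rw [Finset.smul_sum, smul_smul]
        rw [Finset.sum_comm]
        refine sum_congr rfl fun t _ => ?_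
        rw [Finset.sum_comm]
        refine sum_congr rfl fun u _ => ?_
        rw [← Finset.sum_smul, Finset.mul_sum]
        refine congrArg (· • _) (sum_congr rfl fun c _ => ?_)
        ring

lemma omegaOp_single_of_two_mul_le (hρ : IsTHVAction T p d a R ρ)
    (hI : ∀ k, h < k → ∀ v, R.IV k v = 0) {i j : ℕ} (hi : i < p) (hj : j < p) (l m k : ℤ)
    {s : ℕ} (hs : 2 * h ≤ s) (v : R.V) :
    OmegaOp ρ T.I p i j l m s (Finsupp.single k v) =
      ∑ t ∈ Ico (d j) (h + 1), ∑ u ∈ Ico (d i) (h + 1),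
        (if u + t = s then (s ! / (u ! * t !) * ((-p) ^ u * p ^ t) : ℂ) else 0) •
          Finsupp.single (p * l + k + i + j) (R.IV u (R.IV t v)) := by
  rw [hρ.omegaOp_single hI hi hj]
  refine sum_congr rfl fun t ht => sum_congr rfl fun u hu => ?_
  rw [mem_Ico] at ht hu
  rw [sum_range_alternating_choose_mul_linear_pow_mul_linear_pow _ _ _ _ (by omega)]
  split_ifs
  · rw [div_mul_eq_mul_div, div_eq_inv_mul]
  · rw [mul_zero]

end

lemma d_le_of_annLevel {T : TwistedHV} {p : ℕ} {d : ℕ → ℕ} {a : ℂ}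
    {R : THVRep (dmin p d)} {ρ : T.T →ₗ⁅ℂ⁆ Module.End ℂ (ℤ →₀ R.V)}
    (hρ : IsTHVAction T p d a R ρ) (hp : 0 < p) (hd : ∀ i, d i ≤ 1)
    {h q : ℕ} (hlev : R.AnnLevel h q) {r : ℕ} (hr : r < p) : d r ≤ h := by
  by_contra! hlt
  obtain rfl : h = 0 := by have := hd r; omega
  obtain ⟨hmin, ⟨v₀, hv₀⟩, -, hI, -⟩ := hlev
  have hIr : ρ (T.I (p * 1 + r)) = 0 := Finsupp.lhom_ext fun c w => by
    rw [hρ.I_single hI, toNat_natCast_mul_add_emod hr, Ico_eq_empty (by omega), sum_empty,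
      LinearMap.zero_apply]
  obtain ⟨r₀, hr₀, hdr₀⟩ := exists_lt_eq_dmin hp d
  have hIr₀ := T.map_I_eq_zero_of_map_I_eq_zero hρ.2.2.2.1 (by omega) hIr (p * 0 + r₀)
  have hact := hρ.I_single hI (p * 0 + r₀) 0 v₀
  rw [hIr₀, toNat_natCast_mul_add_emod hr₀, hdr₀, show Ico (dmin p d) (0 + 1) = {0} by
    rw [Nat.le_zero.mp hmin]; rfl, sum_singleton, pow_zero, Nat.factorial_zero, Nat.cast_one,
    div_one, one_smul] at hact
  exact hv₀ (Finsupp.single_eq_zero.mp hact.symm)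

end IsTHVAction

theorem omega_action_thv_general (p : ℕ) (hp : 1 < p) (T : TwistedHV) (a : ℂ)
    (d : ℕ → ℕ) (hd : ∀ i, d i ≤ 1)
    (R : THVRep (dmin p d)) (h q : ℕ) (hlev : R.AnnLevel h q)
    (ρ : T.T →ₗ⁅ℂ⁆ Module.End ℂ (ℤ →₀ R.V)) (hρ : IsTHVAction T p d a R ρ)
    (v : R.V) (l m k : ℤ) (i j : ℕ)
    (hi2 : i ≤ p - 1) (hj2 : j ≤ p - 1) :
    OmegaOp ρ T.I p i j l m (2 * h) (Finsupp.single k v) =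
      ((-1 : ℂ) ^ h * (p : ℂ) ^ (2 * h) * ((2 * h).choose h : ℂ)) •
        Finsupp.single ((p : ℤ) * l + k + (i : ℤ) + (j : ℤ)) (R.IV h (R.IV h v)) ∧
    ∀ s : ℕ, 2 * h < s → OmegaOp ρ T.I p i j l m s (Finsupp.single k v) = 0 := by
  have hi : i < p := by omega
  have hj : j < p := by omega
  have hI := hlev.2.2.2.1
  have hdi : d i ≤ h := hρ.d_le_of_annLevel (by omega) hd hlev hi
  have hdj : d j ≤ h := hρ.d_le_of_annLevel (by omega) hd hlev hj
  constructor
  · rw [hρ.omegaOp_single_of_two_mul_le hI hi hj l m k le_rfl,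
      sum_eq_single_of_mem h (by simpa using hdj) fun t ht hth => sum_eq_zero fun u hu => by
        rw [mem_Ico] at ht hu
        rw [if_neg (by omega), zero_smul],
      sum_eq_single_of_mem h (by simpa using hdi) fun u hu huh => by
        rw [mem_Ico] at hu
        rw [if_neg (by omega), zero_smul],
      if_pos (two_mul h).symm]
    congr 1
    rw [Nat.cast_choose ℂ (by omega : h ≤ 2 * h), show 2 * h - h = h by omega, neg_pow, two_mul,
      pow_add]
    ring
  · intro s hs
    rw [hρ.omegaOp_single_of_two_mul_le hI hi hj l m k hs.le]
    refine sum_eq_zero fun t ht => sum_eq_zero fun u hu => ?_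
    rw [mem_Ico] at ht hu
    rw [if_neg (by omega), zero_smul]

/-- action of the operators `Ω^{(i,j,s)}_{l,m}` on the `𝔗`-module `M(V, a, d)`,
for `V` restricted with annihilating level `(h, q)`. -/
theorem omega_action_thv (p : ℕ) (hp : 1 < p) (T : TwistedHV) (a : ℂ)
    (d : ℕ → ℕ) (hd : ∀ i, d i ≤ 1)
    (R : THVRep (dmin p d)) (hres : R.Restricted) (h q : ℕ) (hlev : R.AnnLevel h q)
    (ρ : T.T →ₗ⁅ℂ⁆ Module.End ℂ (ℤ →₀ R.V)) (hρ : IsTHVAction T p d a R ρ)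
    (v : R.V) (l m k : ℤ) (i j : ℕ)
    (hi1 : 1 ≤ i) (hi2 : i ≤ p - 1) (hj1 : 1 ≤ j) (hj2 : j ≤ p - 1) :
    OmegaOp ρ T.I p i j l m (2 * h) (Finsupp.single k v) =
      ((-1 : ℂ) ^ h * (p : ℂ) ^ (2 * h) * ((2 * h).choose h : ℂ)) •
        Finsupp.single ((p : ℤ) * l + k + (i : ℤ) + (j : ℤ)) (R.IV h (R.IV h v)) ∧
    ∀ s : ℕ, 2 * h < s → OmegaOp ρ T.I p i j l m s (Finsupp.single k v) = 0 :=
  omega_action_thv_general p hp T a d hd R h q hlev ρ hρ v l m k i j hi2 hj2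
end

section
/- Let a, b, c ∈ ℂ. Then the complex vector space with basis {v_k : k ∈ ℤ} carries a module structure over the twisted Heisenberg–Virasoro algebra 𝔗 determined by L_m · v_k = (a + k + bm) v_{m+k}, I_m · v_k = c v_{m+k}, and C_L, C_LI, C_I acting as 0, for all m, k ∈ ℤ (the module of intermediate series A_{a,b,c}). -/
open Finsupp TensorProduct

attribute [instance] LieRing.ofAssociativeRing

/-!
`L m` and `I m` act on `ℤ →₀ ℂ` by weighted shifts `v k ↦ w k • v (m + k)`. The commutator of two
weighted shifts is again a weighted shift, so the defining relations of `𝔗`, with the centre acting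
by zero, reduce to polynomial identities between the weights; and since `L m`, `I m`, `CL`, `CLI`,
`CI` form a basis, a linear map respecting the brackets of basis vectors is a Lie homomorphism.
-/

theorem LinearMap.map_lie_of_basis {R L L' ι : Type*} [CommRing R] [LieRing L] [LieAlgebra R L]
    [LieRing L'] [LieAlgebra R L'] (b : Module.Basis ι R L) (f : L →ₗ[R] L')
    (h : ∀ i j, f ⁅b i, b j⁆ = ⁅f (b i), f (b j)⁆) (x y : L) : f ⁅x, y⁆ = ⁅f x, f y⁆ := by
  have := LinearMap.ext_basis (B := (LieModule.toEnd R L L : L →ₗ[R] L →ₗ[R] L).compr₂ f)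
    (B' := (LieModule.toEnd R L' L' : L' →ₗ[R] L' →ₗ[R] L').compl₁₂ f f) b b (by simpa using h)
  simpa using congr($this x y)

def LieHom.ofBasis {R L L' ι : Type*} [CommRing R] [LieRing L] [LieAlgebra R L]
    [LieRing L'] [LieAlgebra R L'] (b : Module.Basis ι R L) (f : L →ₗ[R] L')
    (h : ∀ i j, f ⁅b i, b j⁆ = ⁅f (b i), f (b j)⁆) : L →ₗ⁅R⁆ L' :=
  { f with map_lie' := fun {x y} => f.map_lie_of_basis b h x y }

section WeightedShift

variable {R G : Type*} [CommRing R] [AddCommMonoid G]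

noncomputable def weightedShift (m : G) (w : G → R) : Module.End R (G →₀ R) :=
  Finsupp.lsum R fun k => w k • Finsupp.lsingle (m + k)

@[simp]
theorem weightedShift_single (m : G) (w : G → R) (k : G) (x : R) :
    weightedShift m w (Finsupp.single k x) = w k • Finsupp.single (m + k) x := by
  simp [weightedShift]

@[simp]
theorem weightedShift_zero (m : G) :
    weightedShift m (fun _ => 0) = (0 : Module.End R (G →₀ R)) := by
  ext k : 2
  simp

theorem smul_weightedShift (c : R) (m : G) (w : G → R) :
    c • weightedShift m w = weightedShift m fun k => c * w k := by
  ext k : 2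
  simp

theorem weightedShift_sub (m : G) (w w' : G → R) :
    weightedShift m w - weightedShift m w' = weightedShift m fun k => w k - w' k := by
  ext k : 2
  simp [sub_smul]

theorem weightedShift_mul (m n : G) (w w' : G → R) :
    weightedShift m w * weightedShift n w' =
      weightedShift (m + n) fun k => w (n + k) * w' k := by
  ext k : 2
  simp [add_assoc]

theorem lie_weightedShift (m n : G) (w w' : G → R) :
    ⁅weightedShift m w, weightedShift n w'⁆ =
      weightedShift (m + n) fun k => w (n + k) * w' k - w' (m + k) * w k := by
  change weightedShift m w * weightedShift n w' - weightedShift n w' * weightedShift m w = _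
  rw [weightedShift_mul, weightedShift_mul, add_comm n m, weightedShift_sub]

end WeightedShift

namespace TwistedHV

variable {T : TwistedHV}

@[simp]
theorem basis_inl (m : ℤ) : T.basis (Sum.inl m) = T.L m := by
  rw [T.basis_eq]; rfl

@[simp]
theorem basis_inr_inl (m : ℤ) : T.basis (Sum.inr (Sum.inl m)) = T.I m := by
  rw [T.basis_eq]; rfl

theorem lie_basis_inr_inr (j : Fin 3) (x : T.T) : ⁅T.basis (Sum.inr (Sum.inr j)), x⁆ = 0 := by
  rw [T.basis_eq]
  fin_cases j
  exacts [T.central_CL x, T.central_CLI x, T.central_CI x]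

variable {L' : Type*} [LieRing L'] [LieAlgebra ℂ L'] (Lop Iop : ℤ → L')

noncomputable def liftCenterlessLinear : T.T →ₗ[ℂ] L' :=
  T.basis.constr ℂ (Sum.elim Lop (Sum.elim Iop 0))

@[simp]
theorem liftCenterlessLinear_L (m : ℤ) : liftCenterlessLinear Lop Iop (T.L m) = Lop m := by
  simp [liftCenterlessLinear, ← basis_inl]

@[simp]
theorem liftCenterlessLinear_I (m : ℤ) : liftCenterlessLinear Lop Iop (T.I m) = Iop m := by
  simp [liftCenterlessLinear, ← basis_inr_inl]

theorem liftCenterlessLinear_basis_inr_inr (j : Fin 3) :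
    liftCenterlessLinear Lop Iop (T.basis (Sum.inr (Sum.inr j))) = 0 := by
  simp [liftCenterlessLinear]

@[simp]
theorem liftCenterlessLinear_CL : liftCenterlessLinear Lop Iop T.CL = 0 := by
  simpa [T.basis_eq] using liftCenterlessLinear_basis_inr_inr (T := T) Lop Iop 0

@[simp]
theorem liftCenterlessLinear_CLI : liftCenterlessLinear Lop Iop T.CLI = 0 := by
  simpa [T.basis_eq] using liftCenterlessLinear_basis_inr_inr (T := T) Lop Iop 1

@[simp]
theorem liftCenterlessLinear_CI : liftCenterlessLinear Lop Iop T.CI = 0 := by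
  simpa [T.basis_eq] using liftCenterlessLinear_basis_inr_inr (T := T) Lop Iop 2

theorem liftCenterlessLinear_lie_L_L (m n : ℤ) :
    liftCenterlessLinear Lop Iop ⁅T.L m, T.L n⁆ = ((n : ℂ) - m) • Lop (m + n) := by
  rw [T.bracket_LL]
  split_ifs <;> simp

theorem liftCenterlessLinear_lie_L_I (m n : ℤ) :
    liftCenterlessLinear Lop Iop ⁅T.L m, T.I n⁆ = (n : ℂ) • Iop (m + n) := by
  rw [T.bracket_LI]
  split_ifs <;> simp

theorem liftCenterlessLinear_lie_I_I (m n : ℤ) :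
    liftCenterlessLinear Lop Iop ⁅T.I m, T.I n⁆ = 0 := by
  rw [T.bracket_II]
  split_ifs <;> simp

variable {Lop Iop}
  (hLL : ∀ m n : ℤ, ⁅Lop m, Lop n⁆ = ((n : ℂ) - m) • Lop (m + n))
  (hLI : ∀ m n : ℤ, ⁅Lop m, Iop n⁆ = (n : ℂ) • Iop (m + n))
  (hII : ∀ m n : ℤ, ⁅Iop m, Iop n⁆ = 0)
include hLL hLI hII

theorem liftCenterlessLinear_lie_basis (i j : ℤ ⊕ ℤ ⊕ Fin 3) :
    liftCenterlessLinear Lop Iop ⁅T.basis i, T.basis j⁆ =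
      ⁅liftCenterlessLinear Lop Iop (T.basis i), liftCenterlessLinear Lop Iop (T.basis j)⁆ := by
  set f := liftCenterlessLinear (T := T) Lop Iop
  have swap {x y : T.T} (h : f ⁅x, y⁆ = ⁅f x, f y⁆) : f ⁅y, x⁆ = ⁅f y, f x⁆ := by
    rw [← lie_skew, map_neg, h, lie_skew]
  have central (k : Fin 3) (x : T.T) :
      f ⁅T.basis (Sum.inr (Sum.inr k)), x⁆ = ⁅f (T.basis (Sum.inr (Sum.inr k))), f x⁆ := by
    simp [f, lie_basis_inr_inr, liftCenterlessLinear_basis_inr_inr]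
  rcases i with m | m | k
  · rcases j with n | n | k
    · simp [f, liftCenterlessLinear_lie_L_L, hLL]
    · simp [f, liftCenterlessLinear_lie_L_I, hLI]
    · exact swap (central k _)
  · rcases j with n | n | k
    · exact swap (by simp [f, liftCenterlessLinear_lie_L_I, hLI])
    · simp [f, liftCenterlessLinear_lie_I_I, hII]
    · exact swap (central k _)
  · exact central k _

noncomputable def liftCenterless : T.T →ₗ⁅ℂ⁆ L' :=
  LieHom.ofBasis T.basis (liftCenterlessLinear Lop Iop) (liftCenterlessLinear_lie_basis hLL hLI hII)

@[simp]
theorem liftCenterless_apply (x : T.T) :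
    liftCenterless hLL hLI hII x = liftCenterlessLinear Lop Iop x :=
  rfl

end TwistedHV

/-- the module of intermediate series `A_{a,b,c}` over the twisted
Heisenberg-Virasoro algebra, on the space with basis `{v k : k ∈ ℤ}`. -/
theorem intermediate_series_thv (T : TwistedHV) (a b c : ℂ) :
    ∃ ρ : T.T →ₗ⁅ℂ⁆ Module.End ℂ (ℤ →₀ ℂ),
      (∀ m k : ℤ, ρ (T.L m) (Finsupp.single k (1 : ℂ)) =
        (a + (k : ℂ) + b * (m : ℂ)) • Finsupp.single (m + k) (1 : ℂ)) ∧
      (∀ m k : ℤ, ρ (T.I m) (Finsupp.single k (1 : ℂ)) =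
        c • Finsupp.single (m + k) (1 : ℂ)) ∧
      ρ T.CL = 0 ∧ ρ T.CLI = 0 ∧ ρ T.CI = 0 := by
  set Lop : ℤ → Module.End ℂ (ℤ →₀ ℂ) := fun m => weightedShift m fun k => a + k + b * m
  set Iop : ℤ → Module.End ℂ (ℤ →₀ ℂ) := fun m => weightedShift m fun _ => c
  have hLL (m n : ℤ) : ⁅Lop m, Lop n⁆ = ((n : ℂ) - m) • Lop (m + n) := by
    rw [lie_weightedShift, smul_weightedShift]
    congr 1 with k
    push_cast
    ring
  have hLI (m n : ℤ) : ⁅Lop m, Iop n⁆ = (n : ℂ) • Iop (m + n) := by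
    rw [lie_weightedShift, smul_weightedShift]
    congr 1 with k
    push_cast
    ring
  have hII (m n : ℤ) : ⁅Iop m, Iop n⁆ = 0 := by
    simp [Iop, lie_weightedShift]
  refine ⟨TwistedHV.liftCenterless (T := T) hLL hLI hII, fun m k => ?_, fun m k => ?_, ?_, ?_, ?_⟩
    <;> simp [Lop, Iop]
end
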